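/- Let n ≥ 1 and m_0, m_1, ..., m_n be integers each at least 2. Define the general H-KRLS cost A = Σ_{k=0}^{n} (Π_{i=k+1}^{n} m_i)·(m_k)^2 (with the empty product equal to 1) and the KRLS cost B = (Π_{i=0}^{n} m_i)^2. Then A < B. -/
import Mathlib


/-- General H-KRLS cost `A = ∑_{k=0}^n (∏_{i=k+1}^n m_i)·m_k²` is less than the KRLS
cost `B = (∏_{i=0}^n m_i)²` when `n ≥ 1` and every `m_i ≥ 2`. -/
theorem stmt_10 (n : ℕ) (hn : 1 ≤ n) (m : ℕ → ℕ) (hm : ∀ i ≤ n, 2 ≤ m i) :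
    ∑ k ∈ Finset.range (n + 1), (∏ i ∈ Finset.Ioc k n, m i) * (m k) ^ 2 <
      (∏ i ∈ Finset.range (n + 1), m i) ^ 2 := by
  induction n, hn using Nat.le_induction with
  | base =>
    have h0 := hm 0 (by norm_num)
    have h1 := hm 1 (by norm_num)
    simp only [Finset.sum_range_succ, Finset.prod_range_succ, Finset.sum_range_zero,
      Finset.prod_range_zero, Finset.Ioc_self, Finset.prod_empty, one_mul, zero_add]
    have : ∏ i ∈ Finset.Ioc 0 1, m i = m 1 := by
      rw [show Finset.Ioc 0 1 = {1} by rfl, Finset.prod_singleton]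
    rw [this]
    zify at *
    nlinarith [mul_nonneg (mul_nonneg (by linarith : (0:ℤ) ≤ m 1)
        (by nlinarith : (0:ℤ) ≤ (m 0) ^ 2 - 4)) (by linarith : (0:ℤ) ≤ (m 1) - 1),
      sq_nonneg ((m 1 : ℤ) - 2)]
  | succ n hn ih =>
    have hm' : ∀ i ≤ n, 2 ≤ m i := fun i hi => hm i (hi.trans (Nat.le_succ n))
    have IH := ih hm'
    have hms : 2 ≤ m (n + 1) := hm (n + 1) le_rfl
    have hA : ∑ k ∈ Finset.range (n + 1 + 1), (∏ i ∈ Finset.Ioc k (n + 1), m i) * (m k) ^ 2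
        = m (n + 1) * (∑ k ∈ Finset.range (n + 1), (∏ i ∈ Finset.Ioc k n, m i) * (m k) ^ 2)
          + m (n + 1) ^ 2 := by
      rw [Finset.sum_range_succ, Finset.mul_sum]
      congr 1
      · apply Finset.sum_congr rfl
        intro k hk
        have hk' : k ≤ n := Nat.lt_succ_iff.mp (Finset.mem_range.mp hk)
        rw [Finset.prod_Ioc_succ_top hk']
        ring
      · simp [Finset.Ioc_self]
    have hB : (∏ i ∈ Finset.range (n + 1 + 1), m i) ^ 2
        = (∏ i ∈ Finset.range (n + 1), m i) ^ 2 * m (n + 1) ^ 2 := by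
      rw [Finset.prod_range_succ]; ring
    rw [hA, hB]
    set A := ∑ k ∈ Finset.range (n + 1), (∏ i ∈ Finset.Ioc k n, m i) * (m k) ^ 2 with hAdef
    set B := (∏ i ∈ Finset.range (n + 1), m i) ^ 2 with hBdef
    have hone : ∀ i ∈ Finset.range (n + 1), 1 ≤ m i := fun i hi =>
      le_trans (by norm_num) (hm' i (Nat.lt_succ_iff.mp (Finset.mem_range.mp hi)))
    have hp2 : 2 ≤ ∏ i ∈ Finset.range (n + 1), m i :=
      le_trans (hm' 0 (Nat.zero_le n))
        (Finset.single_le_prod' hone (Finset.mem_range.mpr (Nat.succ_pos n)))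
    have hB2 : 2 ≤ B := le_trans hp2 (by rw [hBdef]; exact Nat.le_self_pow two_ne_zero _)
    zify at *
    nlinarith [mul_le_mul_of_nonneg_left (by linarith : (A:ℤ) + 1 ≤ B)
        (by linarith : (0:ℤ) ≤ (m (n + 1) : ℤ)),
      mul_nonneg (mul_nonneg (by linarith : (0:ℤ) ≤ (m (n + 1) : ℤ))
        (by linarith : (0:ℤ) ≤ (m (n + 1) : ℤ) - 1)) (by linarith : (0:ℤ) ≤ (B:ℤ) - 2)]
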